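/- (Determinant representation, trigonometric case, second form.) Let q ∈ ℂ with q ≠ 0 and q² ≠ 1, and let y_1,…,y_N ∈ ℂ be nonzero, pairwise distinct, and satisfy q² y_j ≠ y_k for all j ≠ k. Set ã(x) = ∏_{k=1}^N (q x − q^{−1} y_k) and d̃(x) = ∏_{k=1}^N (x − y_k). Let p_1,…,p_N ∈ ℂ[x] be polynomials of degree at most N−1 whose N×N coefficient matrix is invertible. Then there exists a polynomial P ∈ ℂ[x_1,…,x_N] satisfying the trigonometric DWBC conditions such that for all x_1,…,x_N ∈ ℂ: P(x_1,…,x_N) · (∏_{j=1}^N x_j) · det[ p_k(x_j) ]_{j,k=1,…,N} = det[ p_k(x_j) ã(x_j) − q^{−N} p_k(q² x_j) d̃(x_j) ]_{j,k=1,…,N}. -/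

import Mathlib

/-!
Put `g_m(x) = x^m ã(x) - q^{-N} (q² x)^m d̃(x)`. The right-hand matrix is `[g_m(x_j)] · pᵀ` and
`[p_k(x_j)] = V(x) · pᵀ` with `V(x)` the Vandermonde matrix. Each `g_m` vanishes at `0`, so
`g_m = x h_m` and `det[g_m(x_j)] = (∏ x_j) det[h_m(x_j)]`.

The alternant `det[h_m(x_j)]` vanishes on every hyperplane `x_a = x_b`, so it is divisible by the
product `det V(x) = ∏_{a<b} (x_b - x_a)` of pairwise non-associate primes; `P` is the quotient.
It is symmetric as a quotient of two alternating polynomials, and its degree in each variable is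
`deg h_m - (N - 1) ≤ N - 1`. Since `d̃(y_j) = 0` and `ã(q⁻² y_j) = 0`, the rows `(h_m(y_j))_m`
and `(h_m(q⁻² y_j))_m` are both multiples of `(y_j^m)_m`: this gives the value of `P` at `y` and
its vanishing when two arguments are `y_j` and `q⁻² y_j`.
-/

open scoped BigOperators

namespace SixVertexTrig

/-- A polynomial `P ∈ ℂ[x_1,…,x_N]` satisfies the trigonometric DWBC conditions if it is
symmetric, of degree at most `N-1` in each variable, vanishes whenever two of its
arguments equal `y_j` and `q⁻² y_j` (for some `j`), and takes the value
`(q - q⁻¹)^N ∏_{j≠k} (q y_j - q⁻¹ y_k)` at `x = y`.  (Since `P` is required to be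
symmetric, the vanishing condition is phrased via an arbitrary pair of distinct
argument slots carrying the two values.) -/
def TrigCond (N : ℕ) (q : ℂ) (y : Fin N → ℂ) (P : MvPolynomial (Fin N) ℂ) : Prop :=
  P.IsSymmetric ∧
  (∀ j : Fin N, P.degreeOf j ≤ N - 1) ∧
  (∀ (j : Fin N) (x : Fin N → ℂ) (i₁ i₂ : Fin N), i₁ ≠ i₂ →
    x i₁ = y j → x i₂ = (q ^ 2)⁻¹ * y j → MvPolynomial.eval x P = 0) ∧
  MvPolynomial.eval y P =
    (q - q⁻¹) ^ N * ∏ j, ∏ k ∈ Finset.univ.erase j, (q * y j - q⁻¹ * y k)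

/-- The polynomial `p_i(x) = ∑_{j=1}^N p_{ij} x^{j-1}` of degree at most `N-1`,
determined by the row `i` of a coefficient matrix `p`. -/
noncomputable def pval {N : ℕ} (p : Matrix (Fin N) (Fin N) ℂ) (i : Fin N) (x : ℂ) : ℂ :=
  ∑ j, p i j * x ^ (j : ℕ)

/-- `ã(x) = ∏_{k=1}^N (q x - q⁻¹ y_k)`. -/
noncomputable def aTil (N : ℕ) (q : ℂ) (y : Fin N → ℂ) (x : ℂ) : ℂ :=
  ∏ k, (q * x - q⁻¹ * y k)

/-- `d̃(x) = ∏_{k=1}^N (x - y_k)`. -/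
noncomputable def dTil (N : ℕ) (y : Fin N → ℂ) (x : ℂ) : ℂ :=
  ∏ k, (x - y k)

end SixVertexTrig


namespace Matrix

theorem det_eq_zero_of_rows_eq_smul {n R : Type*} [Fintype n] [DecidableEq n] [CommRing R]
    {M : Matrix n n R} {i j : n} (hij : i ≠ j) (v : n → R) {a b : R}
    (hi : M i = a • v) (hj : M j = b • v) : M.det = 0 := by
  rw [← M.updateRow_eq_self i, hi, det_updateRow_smul, ← (M.updateRow i v).updateRow_eq_self j,
    updateRow_ne hij.symm, hj, det_updateRow_smul, det_zero_of_row_eq hij (by simp [hij]),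
    mul_zero, mul_zero]

end Matrix

namespace MvPolynomial

section CommRing

variable {R σ : Type*} [CommRing R]

theorem X_sub_X_dvd_sub_aeval_update [DecidableEq σ] (i j : σ) (f : MvPolynomial σ R) :
    X i - X j ∣ f - aeval (Function.update X i (X j) : σ → MvPolynomial σ R) f := by
  rw [← Ideal.mem_span_singleton, ← Ideal.Quotient.eq]
  have hmk : (Ideal.Quotient.mkₐ R (Ideal.span {X i - X j})).comp (aeval X) =
      (Ideal.Quotient.mkₐ R _).comp
        (aeval (Function.update X i (X j) : σ → MvPolynomial σ R)) := by
    ext k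
    rcases eq_or_ne k i with rfl | hk
    · simp [Ideal.Quotient.eq]
    · simp [hk]
  simpa using congrArg (· f) hmk

theorem prime_X_sub_X [DecidableEq σ] [IsDomain R] {i j : σ} (hij : i ≠ j) :
    Prime (X i - X j : MvPolynomial σ R) := by
  have hker : Ideal.span {(X i - X j : MvPolynomial σ R)} =
      RingHom.ker (aeval (Function.update X i (X j) : σ → MvPolynomial σ R)) := by
    refine le_antisymm ?_ fun f hf => ?_
    · rw [Ideal.span_le, Set.singleton_subset_iff, SetLike.mem_coe, RingHom.mem_ker]
      simp [hij.symm]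
    · have h := X_sub_X_dvd_sub_aeval_update i j f
      rwa [RingHom.mem_ker.1 hf, sub_zero, ← Ideal.mem_span_singleton] at h
  rw [← Ideal.span_singleton_prime (sub_ne_zero.2 (X_injective.ne hij)), hker]
  exact RingHom.ker_isPrime _

theorem eq_of_X_sub_X_dvd [Nontrivial R] [LinearOrder σ] {a b c d : σ} (hab : a < b)
    (hcd : c < d) (h : X b - X a ∣ (X d - X c : MvPolynomial σ R)) : a = c ∧ b = d := by
  obtain ⟨m, hm⟩ := h
  have hsub := congrArg (aeval (Function.update X b (X a) : σ → MvPolynomial σ R)) hm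
  simp only [map_sub, map_mul, aeval_X, Function.update_self, Function.update_of_ne hab.ne,
    sub_self, zero_mul, sub_eq_zero, Function.update_apply] at hsub
  split_ifs at hsub with hd hc hc <;> have := X_injective hsub <;>
    first | order | exact ⟨this, hd.symm⟩

theorem X_ne_C [Nontrivial R] (i : σ) (c : R) : X i ≠ C c :=
  fun h => by simpa using congrArg (degreeOf i) h

theorem polynomial_aeval_C (g : Polynomial R) (c : R) :
    Polynomial.aeval (C c : MvPolynomial σ R) g = C (g.eval c) :=
  Polynomial.aeval_algebraMap_apply_eq_algebraMap_eval c g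

theorem degreeOf_X_sub_X [DecidableEq σ] [Nontrivial R] {a b : σ} (hab : a ≠ b) (i : σ) :
    degreeOf i (X a - X b : MvPolynomial σ R) =
      (if i = a then 1 else 0) + if i = b then 1 else 0 := by
  rcases eq_or_ne i a with rfl | hia
  · rw [sub_eq_add_neg, degreeOf_add_eq_of_degreeOf_lt] <;> simp [degreeOf_X_of_ne hab, hab]
  rcases eq_or_ne i b with rfl | hib
  · rw [← neg_sub, degreeOf_neg, sub_eq_add_neg, degreeOf_add_eq_of_degreeOf_lt] <;>
      simp [degreeOf_X_of_ne hab.symm, hab.symm]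
  · simp only [hia, hib, if_false]
    exact Nat.le_zero.1 ((degreeOf_sub_le i _ _).trans
      (by simp [degreeOf_X_of_ne hia, degreeOf_X_of_ne hib]))

theorem degreeOf_aeval_X_le [DecidableEq σ] [Nontrivial R] (f : Polynomial R) (i j : σ) :
    degreeOf i (Polynomial.aeval (X j : MvPolynomial σ R) f) ≤
      if j = i then f.natDegree else 0 := by
  rw [Polynomial.aeval_eq_sum_range]
  refine (degreeOf_sum_le _ _ _).trans (Finset.sup_le fun m hm => ?_)
  rw [smul_eq_C_mul]
  refine (degreeOf_C_mul_le _ _ _).trans ?_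
  split_ifs with hji
  · subst hji
    simpa using Nat.lt_succ_iff.1 (Finset.mem_range.1 hm)
  · rw [degreeOf_X_pow_of_ne _ (Ne.symm hji)]

theorem degreeOf_det_le {ι : Type*} [Fintype ι] [DecidableEq ι]
    {M : Matrix ι ι (MvPolynomial σ R)} {i : σ} {r : ι} {D : ℕ}
    (hM : ∀ j k, degreeOf i (M j k) ≤ if j = r then D else 0) : degreeOf i M.det ≤ D := by
  rw [Matrix.det_apply]
  refine (degreeOf_sum_le _ _ _).trans (Finset.sup_le fun e _ => ?_)
  rw [Units.smul_def, zsmul_eq_mul, ← map_intCast (C : R →+* MvPolynomial σ R)]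
  refine (degreeOf_C_mul_le _ _ _).trans ((degreeOf_prod_le _ _ _).trans ?_)
  calc ∑ k, degreeOf i (M (e k) k) ≤ ∑ k, if k = e.symm r then D else 0 :=
        Finset.sum_le_sum fun k _ => by simpa [← Equiv.eq_symm_apply] using hM (e k) k
    _ = D := by simp

theorem degreeOf_det_vandermonde_X [IsDomain R] {N : ℕ} (i : Fin N) :
    degreeOf i (Matrix.vandermonde (X : Fin N → MvPolynomial (Fin N) R)).det = N - 1 := by
  have hne : ∀ a : Fin N, ∀ b ∈ Finset.Ioi a, (X b - X a : MvPolynomial (Fin N) R) ≠ 0 :=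
    fun a b hb => sub_ne_zero.2 (X_injective.ne (Finset.mem_Ioi.1 hb).ne')
  rw [Matrix.det_vandermonde, degreeOf_prod_eq _ _ fun a _ => Finset.prod_ne_zero_iff.2 (hne a)]
  simp_rw [degreeOf_prod_eq _ _ (hne _)]
  rw [Finset.sum_congr rfl fun a _ => Finset.sum_congr rfl fun b hb =>
    degreeOf_X_sub_X (Finset.mem_Ioi.1 hb).ne' i]
  simp only [Finset.sum_add_distrib, Finset.sum_ite_eq, Finset.mem_Ioi, Finset.sum_ite_irrel,
    Finset.sum_const, Fin.card_Ioi, smul_eq_mul, mul_one, mul_zero, Finset.sum_boole, Nat.cast_id,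
    Finset.mem_univ, ↓reduceIte]
  rw [show Finset.univ.filter (· < i) = Finset.Iio i by ext; simp, Fin.card_Iio]
  omega

end CommRing

section Alternant

variable {K : Type*} [Field K] {N : ℕ}

noncomputable def alternant (f : Fin N → Polynomial K) :
    Matrix (Fin N) (Fin N) (MvPolynomial (Fin N) K) :=
  Matrix.of fun j k => Polynomial.aeval (X j) (f k)

theorem aeval_det_alternant {S : Type*} [CommRing S] [Algebra K S] (f : Fin N → Polynomial K)
    (u : Fin N → S) :
    aeval u (alternant f).det = (Matrix.of fun j k => Polynomial.aeval (u j) (f k)).det := by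
  rw [AlgHom.map_det]
  congr 1
  ext j k
  simp [alternant, ← Polynomial.aeval_algHom_apply]

theorem eval_det_alternant (f : Fin N → Polynomial K) (x : Fin N → K) :
    eval x (alternant f).det = (Matrix.of fun j k => (f k).eval (x j)).det := by
  simpa using aeval_det_alternant f x

theorem alternant_X_pow :
    alternant (fun k : Fin N => Polynomial.X ^ (k : ℕ)) =
      Matrix.vandermonde (X : Fin N → MvPolynomial (Fin N) K) := by
  ext j k
  simp [alternant]

theorem rename_det_alternant (f : Fin N → Polynomial K) (e : Equiv.Perm (Fin N)) :
    rename e (alternant f).det = Equiv.Perm.sign e * (alternant f).det := by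
  rw [rename_eq_aeval, aeval_det_alternant, ← Matrix.det_permute]
  rfl

theorem det_vandermonde_X_ne_zero :
    (Matrix.vandermonde (X : Fin N → MvPolynomial (Fin N) K)).det ≠ 0 :=
  Matrix.det_vandermonde_ne_zero_iff.2 X_injective

theorem det_vandermonde_X_dvd_det_alternant (f : Fin N → Polynomial K) :
    (Matrix.vandermonde (X : Fin N → MvPolynomial (Fin N) K)).det ∣ (alternant f).det := by
  rw [Matrix.det_vandermonde, Finset.prod_sigma']
  refine Finset.prod_dvd_of_isRelPrime ?_ fun ⟨a, b⟩ hab => ?_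
  · rintro ⟨a, b⟩ hab ⟨c, d⟩ hcd hne
    simp only [Finset.coe_sigma, Set.mem_sigma_iff, Finset.coe_univ, Set.mem_univ,
      Finset.coe_Ioi, Set.mem_Ioi, true_and] at hab hcd
    refine (prime_X_sub_X hab.ne').irreducible.isRelPrime_iff_not_dvd.2 fun h => hne ?_
    obtain ⟨rfl, rfl⟩ := eq_of_X_sub_X_dvd hab hcd h
    rfl
  · have hab : a < b := by simpa using hab
    have hrow := X_sub_X_dvd_sub_aeval_update b a (alternant f).det
    rwa [aeval_det_alternant, Matrix.det_zero_of_row_eq (M := Matrix.of _) hab.ne'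
      (by funext k; simp [hab.ne]), sub_zero] at hrow

theorem degreeOf_det_alternant_le {f : Fin N → Polynomial K} {D : ℕ}
    (hf : ∀ k, (f k).natDegree ≤ D) (i : Fin N) : degreeOf i (alternant f).det ≤ D :=
  degreeOf_det_le (r := i) fun j k => (degreeOf_aeval_X_le _ i j).trans (by split_ifs <;> simp [hf])

variable {f : Fin N → Polynomial K} {P : MvPolynomial (Fin N) K}
  (hP : (alternant f).det = (Matrix.vandermonde (X : Fin N → MvPolynomial (Fin N) K)).det * P)
include hP

theorem IsSymmetric.of_det_alternant_eq : P.IsSymmetric := by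
  intro e
  have h := congrArg (rename e) hP.symm
  rw [map_mul, ← alternant_X_pow, rename_det_alternant, rename_det_alternant, alternant_X_pow,
    hP, mul_assoc] at h
  have hsign : (Equiv.Perm.sign e : MvPolynomial (Fin N) K) ≠ 0 := by
    rcases Int.units_eq_one_or (Equiv.Perm.sign e) with h | h <;> simp [h]
  exact mul_left_cancel₀ det_vandermonde_X_ne_zero (mul_left_cancel₀ hsign h)

theorem degreeOf_le_of_det_alternant_eq {D : ℕ} (hf : ∀ k, (f k).natDegree ≤ D) (i : Fin N) :
    degreeOf i P ≤ D - (N - 1) := by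
  rcases eq_or_ne P 0 with rfl | hP0
  · simp
  have h := degreeOf_det_alternant_le hf i
  rw [hP, degreeOf_mul_eq det_vandermonde_X_ne_zero hP0, degreeOf_det_vandermonde_X] at h
  omega

theorem eval_mul_det_vandermonde_of_det_alternant_eq (x : Fin N → K) :
    eval x P * (Matrix.vandermonde x).det = (Matrix.of fun j k => (f k).eval (x j)).det := by
  rw [← eval_det_alternant, hP, map_mul, mul_comm, ← alternant_X_pow, eval_det_alternant]
  simp [Matrix.vandermonde]

theorem eval_eq_zero_of_det_alternant_eq {x : Fin N → K} {i₁ i₂ : Fin N} (hi : i₁ ≠ i₂)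
    (hx : x i₁ ≠ x i₂) (w : Fin N → K) {α β : K} (h₁ : ∀ k, (f k).eval (x i₁) = α * w k)
    (h₂ : ∀ k, (f k).eval (x i₂) = β * w k) : eval x P = 0 := by
  -- Specialise only the variables `i₁, i₂`: the Vandermonde factor stays a nonzero polynomial
  -- and can be cancelled, which fails after evaluating at `x` itself if `x` has repeated entries.
  set u : Fin N → MvPolynomial (Fin N) K :=
    Function.update (Function.update X i₁ (C (x i₁))) i₂ (C (x i₂)) with hu
  have hux : (fun i => aeval x (u i)) = x := by
    ext i
    simp only [hu, Function.update_apply]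
    split_ifs <;> simp_all
  have hu_inj : Function.Injective u := by
    intro a b hab
    simp only [hu, Function.update_apply] at hab
    split_ifs at hab <;> simp_all [X_injective.eq_iff, X_ne_C, (X_ne_C _ _).symm]
  have hV : aeval u (Matrix.vandermonde (X : Fin N → MvPolynomial (Fin N) K)).det ≠ 0 := by
    rw [← alternant_X_pow, aeval_det_alternant]
    simpa [Matrix.vandermonde] using Matrix.det_vandermonde_ne_zero_iff.2 hu_inj
  have hdet : aeval u (alternant f).det = 0 := by
    rw [aeval_det_alternant]
    refine Matrix.det_eq_zero_of_rows_eq_smul hi (fun k => C (w k)) (a := C α) (b := C β) ?_ ?_ <;>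
      funext k <;> simp [hu, Function.update_of_ne hi, polynomial_aeval_C, h₁, h₂]
  have hPu : aeval u P = 0 := by
    rw [hP, map_mul] at hdet
    exact (mul_eq_zero.1 hdet).resolve_left hV
  calc eval x P = aeval x (aeval u P) := by
        rw [comp_aeval_apply, hux]
        rfl
    _ = 0 := by rw [hPu, map_zero]

end Alternant

end MvPolynomial

namespace SixVertexTrig

open Polynomial

section Polynomials

variable (N : ℕ) (q : ℂ) (y : Fin N → ℂ)

noncomputable def aTilPoly : ℂ[X] := ∏ k, (C q * X - C (q⁻¹ * y k))

noncomputable def dTilPoly : ℂ[X] := ∏ k, (X - C (y k))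

noncomputable def gPoly (m : Fin N) : ℂ[X] :=
  X ^ (m : ℕ) * aTilPoly N q y - C (q ^ (-(N : ℤ))) * (C (q ^ 2) * X) ^ (m : ℕ) * dTilPoly N y

noncomputable def hPoly (m : Fin N) : ℂ[X] := (gPoly N q y m).divX

variable {N q y}

theorem eval_aTilPoly (x : ℂ) : (aTilPoly N q y).eval x = aTil N q y x := by
  simp [aTilPoly, aTil, eval_prod]

theorem eval_dTilPoly (x : ℂ) : (dTilPoly N y).eval x = dTil N y x := by
  simp [dTilPoly, dTil, eval_prod]

theorem eval_gPoly (m : Fin N) (x : ℂ) : (gPoly N q y m).eval x =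
    x ^ (m : ℕ) * aTil N q y x - q ^ (-(N : ℤ)) * (q ^ 2 * x) ^ (m : ℕ) * dTil N y x := by
  simp [gPoly, eval_aTilPoly, eval_dTilPoly]

theorem natDegree_aTilPoly_le : (aTilPoly N q y).natDegree ≤ N :=
  (natDegree_prod_le _ _).trans <| (Finset.sum_le_card_nsmul _ _ 1 fun k _ =>
    by compute_degree).trans (by simp)

theorem natDegree_dTilPoly_le : (dTilPoly N y).natDegree ≤ N :=
  (natDegree_prod_le _ _).trans <| (Finset.sum_le_card_nsmul _ _ 1 fun k _ =>
    (natDegree_X_sub_C (y k)).le).trans (by simp)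

theorem natDegree_gPoly_le (m : Fin N) : (gPoly N q y m).natDegree ≤ m + N := by
  unfold gPoly
  have hlin : (C (q ^ 2) * X).natDegree ≤ 1 := by compute_degree
  refine natDegree_sub_le_of_le
    (natDegree_mul_le_of_le (natDegree_X_pow_le _) natDegree_aTilPoly_le)
    (natDegree_mul_le_of_le ((natDegree_C_mul_le _ _).trans (natDegree_pow_le_of_le _ hlin))
      natDegree_dTilPoly_le) |>.trans (by omega)

theorem coeff_zero_gPoly (m : Fin N) : (gPoly N q y m).coeff 0 = 0 := by
  rw [coeff_zero_eq_eval_zero, eval_gPoly]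
  rcases eq_or_ne (m : ℕ) 0 with hm | hm
  · simp only [hm, pow_zero, one_mul, aTil, dTil, mul_zero, zero_sub, zpow_neg, zpow_natCast]
    rw [Finset.prod_congr rfl fun _ _ => (mul_neg _ _).symm, Finset.prod_mul_distrib]
    simp
  · simp [hm]

theorem hPoly_mul_X (m : Fin N) : hPoly N q y m * X = gPoly N q y m := by
  simpa [hPoly, coeff_zero_gPoly] using divX_mul_X_add (gPoly N q y m)

theorem eval_hPoly (m : Fin N) {x : ℂ} (hx : x ≠ 0) :
    (hPoly N q y m).eval x = (gPoly N q y m).eval x / x := by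
  rw [← hPoly_mul_X, eval_mul, eval_X, mul_div_cancel_right₀ _ hx]

theorem natDegree_hPoly_le (m : Fin N) : (hPoly N q y m).natDegree ≤ 2 * (N - 1) := by
  rw [hPoly, natDegree_divX_eq_natDegree_tsub_one]
  have := natDegree_gPoly_le (q := q) (y := y) m
  omega

theorem eval_gPoly_self (m j : Fin N) :
    (gPoly N q y m).eval (y j) = aTil N q y (y j) * y j ^ (m : ℕ) := by
  have hd : dTil N y (y j) = 0 := Finset.prod_eq_zero (Finset.mem_univ j) (sub_self _)
  rw [eval_gPoly, hd]
  ring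

theorem eval_gPoly_inv_sq_mul (hq : q ≠ 0) (m j : Fin N) :
    (gPoly N q y m).eval ((q ^ 2)⁻¹ * y j) =
      -(q ^ (-(N : ℤ)) * dTil N y ((q ^ 2)⁻¹ * y j)) * y j ^ (m : ℕ) := by
  have ha : aTil N q y ((q ^ 2)⁻¹ * y j) = 0 :=
    Finset.prod_eq_zero (Finset.mem_univ j) (by field_simp; ring)
  have hs : q ^ 2 * ((q ^ 2)⁻¹ * y j) = y j := by field_simp
  rw [eval_gPoly, ha, hs]
  ring

theorem aTil_self_div (j : Fin N) (hy : y j ≠ 0) :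
    aTil N q y (y j) / y j = (q - q⁻¹) * ∏ k ∈ Finset.univ.erase j, (q * y j - q⁻¹ * y k) := by
  rw [aTil, ← Finset.mul_prod_erase _ _ (Finset.mem_univ j)]
  field_simp

end Polynomials

section Matrices

variable {N : ℕ} (q : ℂ) (y : Fin N → ℂ) (p : Matrix (Fin N) (Fin N) ℂ) (x : Fin N → ℂ)

theorem of_pval_eq_vandermonde_mul :
    Matrix.of (fun j k => pval p k (x j)) = Matrix.vandermonde x * p.transpose := by
  ext j k
  simp [pval, Matrix.mul_apply, mul_comm]

theorem of_pval_mul_aTil_sub_eq :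
    Matrix.of (fun j k => pval p k (x j) * aTil N q y (x j) -
        q ^ (-(N : ℤ)) * pval p k (q ^ 2 * x j) * dTil N y (x j)) =
      Matrix.of (fun j m => (gPoly N q y m).eval (x j)) * p.transpose := by
  ext j k
  simp only [pval, Matrix.of_apply, Matrix.mul_apply, Matrix.transpose_apply, eval_gPoly,
    Finset.sum_mul, Finset.mul_sum, ← Finset.sum_sub_distrib]
  exact Finset.sum_congr rfl fun m _ => by ring

theorem det_eval_gPoly :
    (Matrix.of fun j m => (gPoly N q y m).eval (x j)).det =
      (∏ j, x j) * (Matrix.of fun j m => (hPoly N q y m).eval (x j)).det := by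
  rw [← Matrix.det_mul_column]
  congr 1
  ext j m
  rw [Matrix.of_apply, Matrix.of_apply, Matrix.of_apply, ← hPoly_mul_X, eval_mul, eval_X, mul_comm]

end Matrices

section Quotient

variable {N : ℕ} {q : ℂ} {y : Fin N → ℂ} {P : MvPolynomial (Fin N) ℂ}
  (hP : (MvPolynomial.alternant (hPoly N q y)).det =
    (Matrix.vandermonde (MvPolynomial.X : Fin N → MvPolynomial (Fin N) ℂ)).det * P)
include hP

theorem eval_self_of_det_alternant_eq (hy0 : ∀ j, y j ≠ 0) (hy : Function.Injective y) :
    MvPolynomial.eval y P =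
      (q - q⁻¹) ^ N * ∏ j, ∏ k ∈ Finset.univ.erase j, (q * y j - q⁻¹ * y k) := by
  have h := MvPolynomial.eval_mul_det_vandermonde_of_det_alternant_eq hP y
  have hrows : (Matrix.of fun j k => (hPoly N q y k).eval (y j)) =
      Matrix.of fun j k => aTil N q y (y j) / y j * Matrix.vandermonde y j k := by
    ext j k
    rw [Matrix.of_apply, Matrix.of_apply, eval_hPoly _ (hy0 j), eval_gPoly_self,
      Matrix.vandermonde_apply]
    ring
  rw [hrows, Matrix.det_mul_column] at h
  rw [mul_right_cancel₀ (Matrix.det_vandermonde_ne_zero_iff.2 hy) h]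
  simp_rw [aTil_self_div _ (hy0 _)]
  rw [Finset.prod_mul_distrib, Finset.prod_const, Finset.card_univ, Fintype.card_fin]

theorem eval_eq_zero_of_apply_eq_inv_sq_mul (hq : q ≠ 0) (hq2 : q ^ 2 ≠ 1) (hy0 : ∀ j, y j ≠ 0)
    (j : Fin N) (x : Fin N → ℂ) (i₁ i₂ : Fin N) (hi : i₁ ≠ i₂) (h₁ : x i₁ = y j)
    (h₂ : x i₂ = (q ^ 2)⁻¹ * y j) : MvPolynomial.eval x P = 0 := by
  have hs : (q ^ 2)⁻¹ * y j ≠ 0 := mul_ne_zero (by simpa using hq) (hy0 j)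
  refine MvPolynomial.eval_eq_zero_of_det_alternant_eq hP hi ?_ (fun m => y j ^ (m : ℕ))
    (α := aTil N q y (y j) / y j)
    (β := -(q ^ (-(N : ℤ)) * dTil N y ((q ^ 2)⁻¹ * y j)) / ((q ^ 2)⁻¹ * y j)) ?_ ?_
  · rw [h₁, h₂]
    intro h
    have := hy0 j
    field_simp at h
    exact hq2 h
  · intro m
    rw [h₁, eval_hPoly _ (hy0 j), eval_gPoly_self]
    ring
  · intro m
    rw [h₂, eval_hPoly _ hs, eval_gPoly_inv_sq_mul hq]
    ring

end Quotient

end SixVertexTrig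

open SixVertexTrig in
theorem trig_det_representation_second_general (N : ℕ) (q : ℂ) (hq : q ≠ 0)
    (hq2 : q ^ 2 ≠ 1) (y : Fin N → ℂ) (hy0 : ∀ j, y j ≠ 0)
    (hy : Function.Injective y)
    (p : Matrix (Fin N) (Fin N) ℂ) :
    ∃ P : MvPolynomial (Fin N) ℂ, TrigCond N q y P ∧
      ∀ x : Fin N → ℂ,
        MvPolynomial.eval x P * (∏ j, x j) *
            Matrix.det (Matrix.of fun j k : Fin N => pval p k (x j)) =
          Matrix.det (Matrix.of fun j k : Fin N =>
            pval p k (x j) * aTil N q y (x j) -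
              q ^ (-(N : ℤ)) * pval p k (q ^ 2 * x j) * dTil N y (x j)) := by
  obtain ⟨P, hP⟩ := MvPolynomial.det_vandermonde_X_dvd_det_alternant (hPoly N q y)
  refine ⟨P, ⟨MvPolynomial.IsSymmetric.of_det_alternant_eq hP, fun i => ?_,
    eval_eq_zero_of_apply_eq_inv_sq_mul hP hq hq2 hy0, eval_self_of_det_alternant_eq hP hy0 hy⟩,
    fun x => ?_⟩
  · exact (MvPolynomial.degreeOf_le_of_det_alternant_eq hP natDegree_hPoly_le i).trans_eq
      (by omega)
  · rw [of_pval_eq_vandermonde_mul, of_pval_mul_aTil_sub_eq, Matrix.det_mul, Matrix.det_mul,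
      det_eval_gPoly, ← MvPolynomial.eval_mul_det_vandermonde_of_det_alternant_eq hP]
    ring

open SixVertexTrig in
/-- determinant representation, trigonometric case, second form:
there is a polynomial `P` satisfying the trigonometric DWBC conditions with
`P(x) ⬝ (∏_j x_j) ⬝ det[p_k(x_j)] = det[p_k(x_j) ã(x_j) - q^{-N} p_k(q² x_j) d̃(x_j)]`. -/
theorem trig_det_representation_second (N : ℕ) (hN : 1 ≤ N) (q : ℂ) (hq : q ≠ 0)
    (hq2 : q ^ 2 ≠ 1) (y : Fin N → ℂ) (hy0 : ∀ j, y j ≠ 0)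
    (hy : Function.Injective y)
    (hyq : ∀ j k : Fin N, j ≠ k → q ^ 2 * y j ≠ y k)
    (p : Matrix (Fin N) (Fin N) ℂ) (hp : IsUnit p.det) :
    ∃ P : MvPolynomial (Fin N) ℂ, TrigCond N q y P ∧
      ∀ x : Fin N → ℂ,
        MvPolynomial.eval x P * (∏ j, x j) *
            Matrix.det (Matrix.of fun j k : Fin N => pval p k (x j)) =
          Matrix.det (Matrix.of fun j k : Fin N =>
            pval p k (x j) * aTil N q y (x j) -
              q ^ (-(N : ℤ)) * pval p k (q ^ 2 * x j) * dTil N y (x j)) :=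
  trig_det_representation_second_general N q hq hq2 y hy0 hy p
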